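/- For every memory interval A and every level L of T, ordered left-to-right, the intersection A ∩ L is a contiguous subsequence of L. -/

import Mathlib

namespace VEB

inductive OTree : Type where
  | node : List OTree → OTree

def OTree.children : OTree → List OTree
  | .node cs => cs

mutual
  def height : OTree → ℕ
    | .node cs => 1 + heightList cs
  def heightList : List OTree → ℕ
    | [] => 0
    | c :: cs => max (height c) (heightList cs)
end

def subtreeAt? : OTree → List ℕ → Option OTree
  | t, [] => some t
  | t, i :: p =>
    match t.children[i]? with
    | some c => subtreeAt? c p
    | none => none

/-- `p` is (the path of) a vertex of `t`. -/
def IsVertex (t : OTree) (p : List ℕ) : Prop := (subtreeAt? t p).isSome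

/-- `p` is a leaf of `t`. -/
def IsLeaf (t : OTree) (p : List ℕ) : Prop := subtreeAt? t p = some (.node [])

/-- All leaves of `t` are at the same depth (the bottom level). -/
def Uniform (t : OTree) : Prop := ∀ p, IsLeaf t p → p.length + 1 = height t

/-- The top `m+1` levels of `t` (the truncation of height `m+1`). -/
def trunc : ℕ → OTree → OTree
  | 0, _ => .node []
  | m+1, t => .node (t.children.map (trunc m))

/-- Paths of the vertices at depth `m`, in left-to-right order. -/
def levelPaths : ℕ → OTree → List (List ℕ)
  | 0, _ => [[]]
  | m+1, t => (t.children.zipIdx.map fun ic => (levelPaths m ic.1).map (ic.2 :: ·)).flatten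

/-- The level at which a tree of height `h` is cut: `max ⌊ε h⌋ 1`. -/
noncomputable def cutLevel (ε : ℝ) (h : ℕ) : ℕ := max ⌊ε * (h : ℝ)⌋₊ 1

/-- The van Emde Boas order of the vertex paths of `t` (with recursion fuel). -/
noncomputable def vEBAux (ε : ℝ) : ℕ → OTree → List (List ℕ)
  | 0, _ => []
  | fuel+1, t =>
    if height t ≤ 1 then [[]]
    else
      let m := cutLevel ε (height t)
      vEBAux ε fuel (trunc (m - 1) t) ++
        ((levelPaths m t).map fun q =>
          match subtreeAt? t q with
          | some s => (vEBAux ε fuel s).map (q ++ ·)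
          | none => []).flatten

/-- The van Emde Boas order `vEB_ε(t)` of the vertex paths of `t`. -/
noncomputable def vEB (ε : ℝ) (t : OTree) : List (List ℕ) := vEBAux ε (height t) t

/-- Position (index) of vertex `p` in the van Emde Boas order. -/
noncomputable def pos (ε : ℝ) (t : OTree) (p : List ℕ) : ℕ := (vEB ε t).idxOf p

/-- `A` is a set of vertices occupying consecutive positions in `vEB_ε(t)`. -/
def MemInterval (ε : ℝ) (t : OTree) (A : Set (List ℕ)) : Prop :=
  ∃ i n, A = {p | p ∈ ((vEB ε t).drop i).take n}

/-- The vertices of the decomposition `D` of `t`: pairs `(p, k)` of the root path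
and the height of a decomposition subtree (with recursion fuel). -/
noncomputable def decompAux (ε : ℝ) : ℕ → OTree → List (List ℕ × ℕ)
  | 0, _ => []
  | fuel+1, t =>
    if height t ≤ 1 then [([], 1)]
    else
      let m := cutLevel ε (height t)
      ([], height t) ::
        (decompAux ε fuel (trunc (m - 1) t) ++
          ((levelPaths m t).map fun q =>
            match subtreeAt? t q with
            | some s => (decompAux ε fuel s).map fun r => (q ++ r.1, r.2)
            | none => []).flatten)

/-- The vertices of the decomposition `D` of `t`. -/
noncomputable def decompVerts (ε : ℝ) (t : OTree) : List (List ℕ × ℕ) :=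
  decompAux ε (height t) t

/-- The children in the decomposition tree `D` of the decomposition vertex `(p, k)`:
the top tree followed by the bottom trees in left-to-right order. -/
noncomputable def dChildren (ε : ℝ) (t : OTree) (p : List ℕ) (k : ℕ) : List (List ℕ × ℕ) :=
  if k ≤ 1 then []
  else
    match subtreeAt? t p with
    | some s =>
      (p, cutLevel ε k) ::
        (levelPaths (cutLevel ε k) s).map fun q => (p ++ q, k - cutLevel ε k)
    | none => []

/-- The decomposition subtree `(p, k)` contains the vertex `w` of `t`;
equivalently, the leaf `{w}` of `D` lies in the subtree of `D` rooted at `(p, k)`. -/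
def DContains (p : List ℕ) (k : ℕ) (w : List ℕ) : Prop :=
  p <+: w ∧ w.length < p.length + k

/-- Vertex `v` is to the left of the branch with leaf `ℓ`. -/
def LeftOfBranch (v ℓ : List ℕ) : Prop := List.Lex (· < ·) v (ℓ.take v.length)

/-- Vertex `v` is to the right of the branch with leaf `ℓ`. -/
def RightOfBranch (v ℓ : List ℕ) : Prop := List.Lex (· < ·) (ℓ.take v.length) v

/-- Every internal vertex of `t` has at least `a` children. -/
def MinArity (t : OTree) (a : ℕ) : Prop :=
  ∀ p s, subtreeAt? t p = some s → s.children ≠ [] → a ≤ s.children.length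

/-- Every internal vertex of `t` has at most `b` children. -/
def MaxArity (t : OTree) (b : ℕ) : Prop :=
  ∀ p s, subtreeAt? t p = some s → s.children.length ≤ b

/-- `w` lies on the leftmost branch descending from `v` (always taking the leftmost child). -/
def OnLeftmostBranch (v w : List ℕ) : Prop :=
  v <+: w ∧ ∀ n (hn : n < w.length), v.length ≤ n → w.get ⟨n, hn⟩ = 0

/-- `w` lies on the rightmost branch descending from `v` (always taking the rightmost child). -/
def OnRightmostBranch (t : OTree) (v w : List ℕ) : Prop :=
  v <+: w ∧ ∀ n (hn : n < w.length), v.length ≤ n →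
    ∀ s, subtreeAt? t (w.take n) = some s → w.get ⟨n, hn⟩ + 1 = s.children.length

/-! Restricting `vEB_ε(T)` to the vertices of depth `d` yields the level `d` in left-to-right
order. Indeed, cutting at depth `m`, the levels above `m` are listed by the top tree, and a level
`m + k` below it is the concatenation, over the depth-`m` vertices `q` from left to right, of
level `k` of the bottom tree hanging at `q` — exactly the order in which the bottom trees are
laid out. A memory interval is a contiguous piece of `vEB_ε(T)`, and a contiguous piece of a list
meets any sorted subsequence of it in a contiguous piece. -/

lemma _root_.List.mem_of_isInfix_of_pairwise_filter {α : Type*} {r : α → α → Prop} [Std.Asymm r]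
    {p : α → Bool} {l L : List α} (hlL : l <:+: L) (hL : (L.filter p).Pairwise r)
    {u v w : α} (hu : u ∈ l) (hw : w ∈ l) (hv : v ∈ L) (hpu : p u) (hpv : p v) (hpw : p w)
    (huv : r u v) (hvw : r v w) : v ∈ l := by
  obtain ⟨s, s', rfl⟩ := hlL
  simp only [List.filter_append, List.pairwise_append, List.mem_append] at hL
  simp only [List.mem_append] at hv
  rcases hv with (hvs | hvl) | hvs'
  · exact absurd (hL.1.2.2 v (List.mem_filter.mpr ⟨hvs, hpv⟩) u (List.mem_filter.mpr ⟨hu, hpu⟩))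
      (Std.Asymm.asymm u v huv)
  · exact hvl
  · exact absurd (hL.2.2 w (.inr (List.mem_filter.mpr ⟨hw, hpw⟩)) v
      (List.mem_filter.mpr ⟨hvs', hpv⟩)) (Std.Asymm.asymm v w hvw)

lemma _root_.List.pairwise_lt_snd_zipIdx {α : Type*} (l : List α) (n : ℕ) :
    (l.zipIdx n).Pairwise fun a b => a.2 < b.2 := by
  induction l generalizing n with
  | nil => exact .nil
  | cons a l ih =>
    refine .cons ?_ (ih (n + 1))
    rintro ⟨x, i⟩ hx
    have := (List.mem_zipIdx hx).1
    show n < i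
    omega

@[simp] lemma children_node (cs : List OTree) : (OTree.node cs).children = cs := rfl

lemma one_le_height : ∀ t, 1 ≤ height t
  | .node cs => by rw [height]; omega

lemma height_le_heightList {c : OTree} {cs : List OTree} (hc : c ∈ cs) :
    height c ≤ heightList cs := by
  induction cs with
  | nil => cases hc
  | cons a l ih =>
    rw [heightList]
    rcases List.mem_cons.mp hc with rfl | h
    · exact le_max_left _ _
    · exact (ih h).trans (le_max_right _ _)

lemma heightList_le {n : ℕ} {cs : List OTree} (h : ∀ c ∈ cs, height c ≤ n) :
    heightList cs ≤ n := by
  induction cs with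
  | nil => rw [heightList]; omega
  | cons a l ih =>
    rw [heightList]
    exact max_le (h a List.mem_cons_self) (ih fun c hc => h c (List.mem_cons_of_mem _ hc))

lemma children_eq_nil_of_height_le_one : ∀ {t : OTree}, height t ≤ 1 → t.children = []
  | .node [], _ => rfl
  | .node (a :: l), h => by
    rw [height, heightList] at h
    have := one_le_height a
    omega

lemma height_trunc_le (k : ℕ) (t : OTree) : height (trunc k t) ≤ k + 1 := by
  induction k generalizing t with
  | zero => rw [trunc, height, heightList]
  | succ k ih =>
    rw [trunc, height]
    have : heightList (t.children.map (trunc k)) ≤ k + 1 := heightList_le <| by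
      simp only [List.mem_map]
      rintro _ ⟨a, -, rfl⟩
      exact ih a
    omega

lemma subtreeAt?_cons_of_getElem?_eq_some {t c : OTree} {i : ℕ} (h : t.children[i]? = some c)
    (p : List ℕ) : subtreeAt? t (i :: p) = subtreeAt? c p := by
  simp only [subtreeAt?, h]

lemma subtreeAt?_cons_of_getElem?_eq_none {t : OTree} {i : ℕ} (h : t.children[i]? = none)
    (p : List ℕ) : subtreeAt? t (i :: p) = none := by
  simp only [subtreeAt?, h]

lemma height_add_length_le_of_subtreeAt? {q : List ℕ} {t s : OTree}
    (h : subtreeAt? t q = some s) : height s + q.length ≤ height t := by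
  induction q generalizing t with
  | nil => cases h; simp
  | cons i p ih =>
    cases hc : t.children[i]? with
    | none => rw [subtreeAt?_cons_of_getElem?_eq_none hc] at h; cases h
    | some c =>
      rw [subtreeAt?_cons_of_getElem?_eq_some hc] at h
      have hcs : height c ≤ heightList t.children :=
        height_le_heightList (List.mem_of_getElem? hc)
      obtain ⟨cs⟩ := t
      have := ih h
      rw [height, List.length_cons]
      simp only [children_node] at hcs
      omega

lemma length_of_mem_levelPaths {m : ℕ} {t : OTree} {p : List ℕ} (hp : p ∈ levelPaths m t) :
    p.length = m := by
  induction m generalizing t p with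
  | zero => simp_all [levelPaths]
  | succ m ih =>
    simp only [levelPaths, List.mem_flatten, List.mem_map] at hp
    obtain ⟨_, ⟨ic, -, rfl⟩, hp⟩ := hp
    obtain ⟨q, hq, rfl⟩ := List.mem_map.mp hp
    simp [ih hq]

lemma IsVertex.mem_levelPaths {t : OTree} {p : List ℕ} (hp : IsVertex t p) :
    p ∈ levelPaths p.length t := by
  induction p generalizing t with
  | nil => simp [levelPaths]
  | cons i p ih =>
    cases hc : t.children[i]? with
    | none => simp [IsVertex, subtreeAt?_cons_of_getElem?_eq_none hc] at hp
    | some c =>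
      rw [IsVertex, subtreeAt?_cons_of_getElem?_eq_some hc] at hp
      simp only [List.length_cons, levelPaths, List.mem_flatten, List.mem_map]
      exact ⟨_, ⟨(c, i), List.mem_zipIdx_iff_getElem?.mpr hc, rfl⟩, List.mem_map_of_mem (ih hp)⟩

lemma pairwise_lex_levelPaths (m : ℕ) (t : OTree) :
    (levelPaths m t).Pairwise (List.Lex (· < ·)) := by
  induction m generalizing t with
  | zero => exact List.pairwise_singleton _ _
  | succ m ih =>
    rw [levelPaths, List.pairwise_flatten, List.pairwise_map]
    refine ⟨?_, (List.pairwise_lt_snd_zipIdx _ 0).imp ?_⟩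
    · simp only [List.mem_map]
      rintro _ ⟨ic, -, rfl⟩
      exact List.pairwise_map.mpr ((ih ic.1).imp .cons)
    · intro a b hab x hx y hy
      obtain ⟨p, -, rfl⟩ := List.mem_map.mp hx
      obtain ⟨q, -, rfl⟩ := List.mem_map.mp hy
      exact .rel hab

lemma levelPaths_trunc {d k : ℕ} (hdk : d ≤ k) (t : OTree) :
    levelPaths d (trunc k t) = levelPaths d t := by
  induction d generalizing k t with
  | zero => rfl
  | succ d ih =>
    obtain ⟨k, rfl⟩ : ∃ k', k = k' + 1 := ⟨k - 1, by omega⟩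
    rw [levelPaths, levelPaths, trunc, children_node, List.zipIdx_map, List.map_map]
    congr 1
    refine List.map_congr_left fun ⟨c, i⟩ _ => ?_
    simp only [Function.comp_apply, Prod.map, id, ih (Nat.le_of_succ_le_succ hdk)]

def flatMapLevel (m : ℕ) (t : OTree) (F : OTree → List (List ℕ)) : List (List ℕ) :=
  (levelPaths m t).flatMap fun q =>
    match subtreeAt? t q with
    | some s => (F s).map (q ++ ·)
    | none => []

lemma mem_flatMapLevel {m : ℕ} {t : OTree} {F : OTree → List (List ℕ)} {p : List ℕ} :
    p ∈ flatMapLevel m t F ↔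
      ∃ q ∈ levelPaths m t, ∃ s, subtreeAt? t q = some s ∧ ∃ r ∈ F s, q ++ r = p := by
  simp only [flatMapLevel, List.mem_flatMap]
  refine exists_congr fun q => and_congr_right fun _ => ?_
  cases subtreeAt? t q <;> simp

lemma le_length_of_mem_flatMapLevel {m : ℕ} {t : OTree} {F : OTree → List (List ℕ)}
    {p : List ℕ} (hp : p ∈ flatMapLevel m t F) : m ≤ p.length := by
  obtain ⟨q, hq, -, -, r, -, rfl⟩ := mem_flatMapLevel.mp hp
  simp [length_of_mem_levelPaths hq]

lemma flatMapLevel_congr {m : ℕ} {t : OTree} {F G : OTree → List (List ℕ)}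
    (h : ∀ q ∈ levelPaths m t, ∀ s, subtreeAt? t q = some s → F s = G s) :
    flatMapLevel m t F = flatMapLevel m t G := by
  refine List.flatMap_congr fun q hq => ?_
  cases hs : subtreeAt? t q with
  | none => rfl
  | some s => simp only [h q hq s hs]

lemma flatMapLevel_zero (t : OTree) (F : OTree → List (List ℕ)) : flatMapLevel 0 t F = F t := by
  simp [flatMapLevel, levelPaths, subtreeAt?]

lemma flatMapLevel_succ (m : ℕ) (t : OTree) (F : OTree → List (List ℕ)) :
    flatMapLevel (m + 1) t F =
      t.children.zipIdx.flatMap fun ic => (flatMapLevel m ic.1 F).map (ic.2 :: ·) := by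
  rw [flatMapLevel, levelPaths, ← List.flatMap_def, List.flatMap_assoc]
  refine List.flatMap_congr fun ⟨c, i⟩ hic => ?_
  rw [flatMapLevel, List.flatMap_map, List.map_flatMap]
  refine List.flatMap_congr fun q _ => ?_
  rw [subtreeAt?_cons_of_getElem?_eq_some (List.mem_zipIdx_iff_getElem?.mp hic)]
  cases subtreeAt? c q <;> simp [Function.comp_def]

lemma filter_length_flatMapLevel (m k : ℕ) (t : OTree) (F : OTree → List (List ℕ)) :
    (flatMapLevel m t F).filter (·.length = m + k) =
      flatMapLevel m t fun s => (F s).filter (·.length = k) := by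
  rw [flatMapLevel, List.filter_flatMap]
  refine List.flatMap_congr fun q hq => ?_
  cases subtreeAt? t q with
  | none => rfl
  | some s =>
    rw [List.filter_map]
    congr 1
    refine List.filter_congr fun r _ => ?_
    simp [length_of_mem_levelPaths hq]

lemma levelPaths_add (m k : ℕ) (t : OTree) :
    levelPaths (m + k) t = flatMapLevel m t (levelPaths k) := by
  induction m generalizing t with
  | zero => rw [Nat.zero_add, flatMapLevel_zero]
  | succ m ih =>
    rw [show m + 1 + k = m + k + 1 by omega, levelPaths, flatMapLevel_succ, ← List.flatMap_def]
    simp only [ih]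

lemma one_le_cutLevel (ε : ℝ) (h : ℕ) : 1 ≤ cutLevel ε h := le_max_right _ _

lemma cutLevel_lt {ε : ℝ} (hε : ε < 1) {h : ℕ} (hh : 2 ≤ h) : cutLevel ε h < h := by
  have hfloor : ⌊ε * h⌋₊ < h := (Nat.floor_lt' (by omega)).mpr <| by
    have : (0 : ℝ) < h := by positivity
    nlinarith
  exact max_lt hfloor (by omega)

lemma vEBAux_succ_of_one_lt {ε : ℝ} {f : ℕ} {t : OTree} (ht : 1 < height t) :
    vEBAux ε (f + 1) t = vEBAux ε f (trunc (cutLevel ε (height t) - 1) t) ++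
      flatMapLevel (cutLevel ε (height t)) t (vEBAux ε f) := by
  rw [vEBAux, if_neg (by omega)]
  rfl

lemma length_lt_of_mem_vEBAux {ε : ℝ} (hε : ε < 1) {f : ℕ} {t : OTree} {p : List ℕ}
    (hp : p ∈ vEBAux ε f t) : p.length < height t := by
  induction f generalizing t p with
  | zero => cases hp
  | succ f ih =>
    by_cases ht : height t ≤ 1
    · simp only [vEBAux, if_pos ht, List.mem_singleton] at hp
      subst hp
      exact one_le_height t
    rw [vEBAux_succ_of_one_lt (by omega), List.mem_append] at hp
    have hm := one_le_cutLevel ε (height t)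
    have hmt := cutLevel_lt hε (h := height t) (by omega)
    rcases hp with hp | hp
    · have := height_trunc_le (cutLevel ε (height t) - 1) t
      have := ih hp
      omega
    · obtain ⟨q, -, s, hs, r, hr, rfl⟩ := mem_flatMapLevel.mp hp
      have := height_add_length_le_of_subtreeAt? hs
      have := ih hr
      simp only [List.length_append]
      omega

lemma filter_length_vEBAux {ε : ℝ} (hε : ε < 1) {f : ℕ} {t : OTree} (hf : height t ≤ f)
    (d : ℕ) : (vEBAux ε f t).filter (·.length = d) = levelPaths d t := by
  induction f generalizing t d with
  | zero => have := one_le_height t; omega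
  | succ f ih =>
    by_cases ht : height t ≤ 1
    · cases d <;> simp [vEBAux, if_pos ht, levelPaths, children_eq_nil_of_height_le_one ht]
    rw [vEBAux_succ_of_one_lt (by omega), List.filter_append]
    set m := cutLevel ε (height t)
    have hm : 1 ≤ m := one_le_cutLevel ε (height t)
    have hmt : m < height t := cutLevel_lt hε (by omega)
    have htrunc : height (trunc (m - 1) t) ≤ m := by
      have := height_trunc_le (m - 1) t
      omega
    by_cases hd : d < m
    · rw [ih (by omega), levelPaths_trunc (by omega), List.filter_eq_nil_iff.mpr, List.append_nil]
      intro p hp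
      have := le_length_of_mem_flatMapLevel hp
      simp only [decide_eq_true_eq]
      omega
    · obtain ⟨k, rfl⟩ : ∃ k, d = m + k := ⟨d - m, by omega⟩
      rw [List.filter_eq_nil_iff.mpr, List.nil_append, filter_length_flatMapLevel, levelPaths_add]
      · refine flatMapLevel_congr fun q hq s hs => ih ?_ k
        have := height_add_length_le_of_subtreeAt? hs
        rw [length_of_mem_levelPaths hq] at this
        omega
      · intro p hp
        have := length_lt_of_mem_vEBAux hε hp
        simp only [decide_eq_true_eq]
        omega

/-- For every memory interval `A` and every level `L` of `T`, ordered
left-to-right, the intersection `A ∩ L` is a contiguous subsequence of the level. -/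
theorem memInterval_inter_level_contiguous
    (ε : ℝ) (hε0 : 0 < ε) (hε1 : ε ≤ 1/2) (t : OTree) (ht : Uniform t)
    (A : Set (List ℕ)) (hA : MemInterval ε t A)
    (u v w : List ℕ) (hu : IsVertex t u) (hv : IsVertex t v) (hw : IsVertex t w)
    (huv : u.length = v.length) (hvw : v.length = w.length)
    (hluv : List.Lex (· < ·) u v) (hlvw : List.Lex (· < ·) v w)
    (huA : u ∈ A) (hwA : w ∈ A) :
    v ∈ A := by
  obtain ⟨i, n, rfl⟩ := hA
  have hlevel : (vEB ε t).filter (·.length = v.length) = levelPaths v.length t :=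
    filter_length_vEBAux (by linarith) le_rfl _
  have hvL : v ∈ vEB ε t := List.mem_of_mem_filter (hlevel ▸ hv.mem_levelPaths)
  exact List.mem_of_isInfix_of_pairwise_filter
    ((List.take_prefix n _).isInfix.trans (List.drop_suffix i _).isInfix)
    (hlevel ▸ pairwise_lex_levelPaths _ t) huA hwA hvL
    (by simp [huv]) (by simp) (by simp [hvw]) hluv hlvw

end VEB
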